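/- arXiv:2601.03532 — 2 statements merged into one kernel-verified Lean document; each statement's English description precedes it below -/
import Mathlib

section
/- With the setup of the pointwise EP–EUP error identity, let J := E[Ẑ⁻¹] − E[Ẑ]⁻¹ denote the Jensen gap. Then the L1 distance satisfies ∫ |q^EP(u) − q^EUP(u)| dν(u) ≤ E[Ẑ]·J + ∫ |Cov(p̂(u), Ẑ⁻¹)| dν(u). -/
open MeasureTheory

/-- L1 bound between the EP and EUP via the Jensen gap. -/
theorem ep_eup_L1_bound
    {Ω U : Type*} [MeasurableSpace Ω] [MeasurableSpace U]
    (P : Measure Ω) [IsProbabilityMeasure P] (ν : Measure U) [SigmaFinite ν]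
    (phat : Ω → U → ℝ)
    (hmeas : Measurable (Function.uncurry phat))
    (hnn : ∀ ω u, 0 ≤ phat ω u)
    (Z : Ω → ℝ) (hZ : ∀ ω, Z ω = ∫ u, phat ω u ∂ν)
    (hZpos : ∀ᵐ ω ∂P, 0 < Z ω)
    (hZint : Integrable Z P)
    (hZinvint : Integrable (fun ω => (Z ω)⁻¹) P)
    (hpint : ∀ u, Integrable (fun ω => phat ω u) P)
    (hratioint : ∀ u, Integrable (fun ω => phat ω u / Z ω) P)
    (hprodint : ∀ u, Integrable (fun ω => phat ω u * (Z ω)⁻¹) P)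
    (qEP qEUP J : _)
    (hEP : qEP = fun u => ∫ ω, phat ω u / Z ω ∂P)
    (hEUP : qEUP = fun u => (∫ ω, phat ω u ∂P) / (∫ ω, Z ω ∂P))
    (hJ : J = (∫ ω, (Z ω)⁻¹ ∂P) - (∫ ω, Z ω ∂P)⁻¹) :
    ∫ u, |qEP u - qEUP u| ∂ν
      ≤ (∫ ω, Z ω ∂P) * J
        + ∫ u, |(∫ ω, phat ω u * (Z ω)⁻¹ ∂P)
                  - (∫ ω, phat ω u ∂P) * (∫ ω, (Z ω)⁻¹ ∂P)| ∂ν := by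
  have hZnn : ∀ᵐ ω ∂P, 0 ≤ Z ω := hZpos.mono fun ω h => h.le
  set c := ∫ ω, Z ω ∂P with hcdef
  set e := ∫ ω, (Z ω)⁻¹ ∂P with hedef
  -- positivity of c
  have hcnn : 0 ≤ c := integral_nonneg_of_ae hZnn
  have hcpos : 0 < c := by
    rcases hcnn.lt_or_eq with h | h
    · exact h
    · exfalso
      have h0 : Z =ᵐ[P] 0 := (integral_eq_zero_iff_of_nonneg_ae hZnn hZint).mp h.symm
      have hfalse : ∀ᵐ ω ∂P, False := by
        filter_upwards [hZpos, h0] with ω h1 h2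
        rw [h2] at h1; exact lt_irrefl 0 h1
      have : P Set.univ = 0 := by simpa [ae_iff] using hfalse
      simp [measure_univ] at this
  -- Jensen gap nonneg
  have hJnn : 0 ≤ J := by
    have hlin : ∀ᵐ ω ∂P, 2 / c - Z ω / c ^ 2 ≤ (Z ω)⁻¹ := by
      filter_upwards [hZpos] with ω hz
      have h : (Z ω)⁻¹ - (2 / c - Z ω / c ^ 2) = (Z ω)⁻¹ * (1 - Z ω / c) ^ 2 := by
        field_simp
        ring
      nlinarith [mul_nonneg (inv_nonneg.mpr hz.le) (sq_nonneg (1 - Z ω / c))]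
    have hint : Integrable (fun ω => 2 / c - Z ω / c ^ 2) P :=
      (integrable_const _).sub (hZint.div_const _)
    have hmono := integral_mono_ae hint hZinvint hlin
    rw [integral_sub (integrable_const _) (hZint.div_const _), integral_const, probReal_univ,
      one_smul, integral_div] at hmono
    rw [hJ]
    have : c / c ^ 2 = c⁻¹ := by field_simp
    rw [this] at hmono
    have h2 : 2 / c = c⁻¹ + c⁻¹ := by rw [div_eq_mul_inv]; ring
    linarith
  have hCnn : ∀ u, 0 ≤ ∫ ω, phat ω u ∂P := fun u => integral_nonneg fun ω => hnn ω u
  -- pointwise decomposition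
  have hdecomp : ∀ u, qEP u - qEUP u
      = ((∫ ω, phat ω u * (Z ω)⁻¹ ∂P) - (∫ ω, phat ω u ∂P) * e)
        + (∫ ω, phat ω u ∂P) * J := by
    intro u
    have h1 : (∫ ω, phat ω u / Z ω ∂P) = ∫ ω, phat ω u * (Z ω)⁻¹ ∂P := by
      simp only [div_eq_mul_inv]
    rw [hEP, hEUP, hJ]
    simp only [← hcdef, ← hedef, h1, div_eq_mul_inv]
    ring
  have hbound : ∀ u, |qEP u - qEUP u|
      ≤ |(∫ ω, phat ω u * (Z ω)⁻¹ ∂P) - (∫ ω, phat ω u ∂P) * e|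
        + (∫ ω, phat ω u ∂P) * J := by
    intro u
    rw [hdecomp u]
    refine le_trans (abs_add_le _ _) ?_
    rw [abs_of_nonneg (mul_nonneg (hCnn u) hJnn)]
  have hboundrev : ∀ u,
      |(∫ ω, phat ω u * (Z ω)⁻¹ ∂P) - (∫ ω, phat ω u ∂P) * e|
      ≤ |qEP u - qEUP u| + (∫ ω, phat ω u ∂P) * J := by
    intro u
    have h := hdecomp u
    have h2 : (∫ ω, phat ω u * (Z ω)⁻¹ ∂P) - (∫ ω, phat ω u ∂P) * e
        = (qEP u - qEUP u) + (-((∫ ω, phat ω u ∂P) * J)) := by linarith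
    rw [h2]
    refine le_trans (abs_add_le _ _) ?_
    rw [abs_neg, abs_of_nonneg (mul_nonneg (hCnn u) hJnn)]
  -- measurability
  have hZm : Measurable Z := by
    have : Z = fun ω => ∫ u, phat ω u ∂ν := funext hZ
    rw [this]
    exact hmeas.stronglyMeasurable.integral_prod_right.measurable
  have msC : Measurable fun u => ∫ ω, phat ω u ∂P :=
    hmeas.stronglyMeasurable.integral_prod_left.measurable
  have msD : Measurable fun u => ∫ ω, phat ω u * (Z ω)⁻¹ ∂P := by
    have hm : Measurable (Function.uncurry fun ω u => phat ω u * (Z ω)⁻¹) :=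
      hmeas.mul ((hZm.comp measurable_fst).inv)
    exact hm.stronglyMeasurable.integral_prod_left.measurable
  have msEP : Measurable fun u => ∫ ω, phat ω u / Z ω ∂P := by
    have hm : Measurable (Function.uncurry fun ω u => phat ω u / Z ω) :=
      hmeas.div (hZm.comp measurable_fst)
    exact hm.stronglyMeasurable.integral_prod_left.measurable
  have msA : Measurable fun u => |qEP u - qEUP u| := by
    simp only [hEP, hEUP]
    exact (msEP.sub (msC.div_const _)).abs
  have msB : Measurable fun u =>
      |(∫ ω, phat ω u * (Z ω)⁻¹ ∂P) - (∫ ω, phat ω u ∂P) * e| :=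
    (msD.sub (msC.mul_const _)).abs
  -- Tonelli: ∫⁻ E[phat u] dν = ofReal c
  have hCl : ∫⁻ u, ENNReal.ofReal (∫ ω, phat ω u ∂P) ∂ν = ENNReal.ofReal c := by
    have h1 : ∀ u, ENNReal.ofReal (∫ ω, phat ω u ∂P)
        = ∫⁻ ω, ENNReal.ofReal (phat ω u) ∂P := fun u =>
      ofReal_integral_eq_lintegral_ofReal (hpint u) (ae_of_all _ fun ω => hnn ω u)
    simp_rw [h1]
    have hswapm : AEMeasurable (Function.uncurry fun ω u => ENNReal.ofReal (phat ω u))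
        (P.prod ν) := (ENNReal.measurable_ofReal.comp hmeas).aemeasurable
    rw [← lintegral_lintegral_swap hswapm]
    have h2 : ∀ᵐ ω ∂P, ∫⁻ u, ENNReal.ofReal (phat ω u) ∂ν = ENNReal.ofReal (Z ω) := by
      filter_upwards [hZpos] with ω hz
      have hint : Integrable (fun u => phat ω u) ν := by
        by_contra hni
        rw [hZ ω, integral_undef hni] at hz
        exact lt_irrefl 0 hz
      rw [hZ ω, ofReal_integral_eq_lintegral_ofReal hint (ae_of_all _ fun u => hnn ω u)]
    rw [lintegral_congr_ae h2, ← ofReal_integral_eq_lintegral_ofReal hZint hZnn]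
  -- lintegral comparisons
  have hlin1 : ∫⁻ u, ENNReal.ofReal |qEP u - qEUP u| ∂ν
      ≤ (∫⁻ u, ENNReal.ofReal
          |(∫ ω, phat ω u * (Z ω)⁻¹ ∂P) - (∫ ω, phat ω u ∂P) * e| ∂ν)
        + ENNReal.ofReal (c * J) := by
    calc ∫⁻ u, ENNReal.ofReal |qEP u - qEUP u| ∂ν
        ≤ ∫⁻ u, (ENNReal.ofReal
            |(∫ ω, phat ω u * (Z ω)⁻¹ ∂P) - (∫ ω, phat ω u ∂P) * e|
          + ENNReal.ofReal ((∫ ω, phat ω u ∂P) * J)) ∂ν := by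
          refine lintegral_mono fun u => ?_
          exact le_trans (ENNReal.ofReal_le_ofReal (hbound u)) (ENNReal.ofReal_add_le)
      _ = (∫⁻ u, ENNReal.ofReal
            |(∫ ω, phat ω u * (Z ω)⁻¹ ∂P) - (∫ ω, phat ω u ∂P) * e| ∂ν)
          + ∫⁻ u, ENNReal.ofReal ((∫ ω, phat ω u ∂P) * J) ∂ν :=
          lintegral_add_left msB.ennreal_ofReal _
      _ = (∫⁻ u, ENNReal.ofReal
            |(∫ ω, phat ω u * (Z ω)⁻¹ ∂P) - (∫ ω, phat ω u ∂P) * e| ∂ν)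
          + ENNReal.ofReal (c * J) := by
          congr 1
          have : ∀ u, ENNReal.ofReal ((∫ ω, phat ω u ∂P) * J)
              = ENNReal.ofReal J * ENNReal.ofReal (∫ ω, phat ω u ∂P) := by
            intro u
            rw [mul_comm, ENNReal.ofReal_mul hJnn]
          simp_rw [this]
          rw [lintegral_const_mul' _ _ ENNReal.ofReal_ne_top, hCl,
            ← ENNReal.ofReal_mul hJnn, mul_comm]
  have hlin2 : ∫⁻ u, ENNReal.ofReal
        |(∫ ω, phat ω u * (Z ω)⁻¹ ∂P) - (∫ ω, phat ω u ∂P) * e| ∂ν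
      ≤ (∫⁻ u, ENNReal.ofReal |qEP u - qEUP u| ∂ν) + ENNReal.ofReal (c * J) := by
    calc ∫⁻ u, ENNReal.ofReal
          |(∫ ω, phat ω u * (Z ω)⁻¹ ∂P) - (∫ ω, phat ω u ∂P) * e| ∂ν
        ≤ ∫⁻ u, (ENNReal.ofReal |qEP u - qEUP u|
            + ENNReal.ofReal ((∫ ω, phat ω u ∂P) * J)) ∂ν := by
          refine lintegral_mono fun u => ?_
          exact le_trans (ENNReal.ofReal_le_ofReal (hboundrev u)) (ENNReal.ofReal_add_le)
      _ = (∫⁻ u, ENNReal.ofReal |qEP u - qEUP u| ∂ν)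
          + ∫⁻ u, ENNReal.ofReal ((∫ ω, phat ω u ∂P) * J) ∂ν :=
          lintegral_add_left msA.ennreal_ofReal _
      _ = (∫⁻ u, ENNReal.ofReal |qEP u - qEUP u| ∂ν) + ENNReal.ofReal (c * J) := by
          congr 1
          have : ∀ u, ENNReal.ofReal ((∫ ω, phat ω u ∂P) * J)
              = ENNReal.ofReal J * ENNReal.ofReal (∫ ω, phat ω u ∂P) := by
            intro u
            rw [mul_comm, ENNReal.ofReal_mul hJnn]
          simp_rw [this]
          rw [lintegral_const_mul' _ _ ENNReal.ofReal_ne_top, hCl,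
            ← ENNReal.ofReal_mul hJnn, mul_comm]
  -- convert Bochner integrals to lintegrals
  have hA : ∫ u, |qEP u - qEUP u| ∂ν
      = (∫⁻ u, ENNReal.ofReal |qEP u - qEUP u| ∂ν).toReal :=
    integral_eq_lintegral_of_nonneg_ae (ae_of_all _ fun u => abs_nonneg _)
      msA.aestronglyMeasurable
  have hB : (∫ u, |(∫ ω, phat ω u * (Z ω)⁻¹ ∂P) - (∫ ω, phat ω u ∂P) * e| ∂ν)
      = (∫⁻ u, ENNReal.ofReal
          |(∫ ω, phat ω u * (Z ω)⁻¹ ∂P) - (∫ ω, phat ω u ∂P) * e| ∂ν).toReal :=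
    integral_eq_lintegral_of_nonneg_ae (ae_of_all _ fun u => abs_nonneg _)
      msB.aestronglyMeasurable
  rw [hA, hB]
  by_cases htop : (∫⁻ u, ENNReal.ofReal
      |(∫ ω, phat ω u * (Z ω)⁻¹ ∂P) - (∫ ω, phat ω u ∂P) * e| ∂ν) = ⊤
  · have hAtop : (∫⁻ u, ENNReal.ofReal |qEP u - qEUP u| ∂ν) = ⊤ := by
      by_contra hAne
      have : (∫⁻ u, ENNReal.ofReal |qEP u - qEUP u| ∂ν) + ENNReal.ofReal (c * J) ≠ ⊤ :=
        ENNReal.add_ne_top.mpr ⟨hAne, ENNReal.ofReal_ne_top⟩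
      exact this (top_le_iff.mp (htop ▸ hlin2))
    rw [htop, hAtop, ENNReal.toReal_top]
    have : 0 ≤ c * J := mul_nonneg hcnn hJnn
    linarith
  · have hne : (∫⁻ u, ENNReal.ofReal
        |(∫ ω, phat ω u * (Z ω)⁻¹ ∂P) - (∫ ω, phat ω u ∂P) * e| ∂ν)
        + ENNReal.ofReal (c * J) ≠ ⊤ :=
      ENNReal.add_ne_top.mpr ⟨htop, ENNReal.ofReal_ne_top⟩
    have h := ENNReal.toReal_mono hne hlin1
    rw [ENNReal.toReal_add htop ENNReal.ofReal_ne_top,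
      ENNReal.toReal_ofReal (mul_nonneg hcnn hJnn)] at h
    linarith
end

section
/- In the scalar-covariance linear Gaussian setting (Σ = σ²I, C₀ = c₀²I, Q = q²I, G = USVᵀ), the EUP covariance C^eup = (GᵀG/(σ²+q²) + I/c₀²)⁻¹ has eigenvalues λ_j^eup = c₀²/(1 + c₀² s_j²/(σ²+q²)) in the basis of right singular vectors, and the EP covariance C^ep = C + (q²/σ⁴) C GᵀG C has eigenvalues λ_j^ep = λ_j + q² s_j² c₀⁴/σ⁴ · (1 + c₀² s_j²/σ²)⁻², where λ_j = c₀²/(1 + c₀² s_j²/σ²). -/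
open Matrix

private lemma smul_posSemidef {d : ℕ} {N : Matrix (Fin d) (Fin d) ℝ}
    (hN : N.PosSemidef) {a : ℝ} (ha : 0 ≤ a) : (a • N).PosSemidef := by
  exact hN.smul ha

private lemma smul_posDef {d : ℕ} {N : Matrix (Fin d) (Fin d) ℝ}
    (hN : N.PosDef) {a : ℝ} (ha : 0 < a) : (a • N).PosDef := by
  exact hN.smul ha

private lemma inv_eig {d : ℕ} {M : Matrix (Fin d) (Fin d) ℝ} (hM : M.PosDef)
    {v : Fin d → ℝ} {c : ℝ} (hc : c ≠ 0) (h : M.mulVec v = c • v) :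
    M⁻¹.mulVec v = c⁻¹ • v := by
  have hinv : M⁻¹ * M = 1 := nonsing_inv_mul M (isUnit_iff_isUnit_det M |>.1 hM.isUnit)
  have h2 : M⁻¹.mulVec (M.mulVec v) = v := by
    rw [mulVec_mulVec, hinv, one_mulVec]
  rw [h, mulVec_smul] at h2
  calc M⁻¹.mulVec v = c⁻¹ • (c • M⁻¹.mulVec v) := by
        rw [smul_smul, inv_mul_cancel₀ hc, one_smul]
    _ = c⁻¹ • v := by rw [h2]

private lemma main_eig {p d : ℕ} (G : Matrix (Fin p) (Fin d) ℝ)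
    {a b s : ℝ} (ha : 0 < a) (hb : 0 < b) {v : Fin d → ℝ}
    (hv : (Gᵀ * G).mulVec v = (s ^ 2) • v) :
    (a • (Gᵀ * G) + b • (1 : Matrix (Fin d) (Fin d) ℝ))⁻¹.mulVec v
      = (a * s ^ 2 + b)⁻¹ • v := by
  have hpsd : (Gᵀ * G).PosSemidef := by
    simpa using Matrix.posSemidef_conjTranspose_mul_self G
  have hpd : (a • (Gᵀ * G) + b • (1 : Matrix (Fin d) (Fin d) ℝ)).PosDef :=
    Matrix.PosDef.posSemidef_add (smul_posSemidef hpsd ha.le)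
      (smul_posDef Matrix.PosDef.one hb)
  have hc : (0:ℝ) < a * s ^ 2 + b := by positivity
  have heig : (a • (Gᵀ * G) + b • (1 : Matrix (Fin d) (Fin d) ℝ)).mulVec v
      = (a * s ^ 2 + b) • v := by
    rw [add_mulVec, smul_mulVec, smul_mulVec, hv, one_mulVec,
      smul_smul, add_smul]
  exact inv_eig hpd hc.ne' heig

/-- eigenvalues of the EUP covariance
`C^eup = (GᵀG/(σ²+q²) + I/c₀²)⁻¹` and of the EP covariance
`C^ep = C + (q²/σ⁴) C GᵀG C` in a right-singular-vector direction `v`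
with `GᵀG v = s² v`. -/
theorem eup_ep_covariance_eigenvalues
    {p d : ℕ} (G : Matrix (Fin p) (Fin d) ℝ)
    (σ c₀ q s : ℝ) (hσ : 0 < σ) (hc₀ : 0 < c₀) (hq : 0 ≤ q)
    (v : Fin d → ℝ)
    (hv : (Gᵀ * G).mulVec v = (s ^ 2) • v)
    (C : Matrix (Fin d) (Fin d) ℝ)
    (hC : C = ((σ ^ 2)⁻¹ • (Gᵀ * G) + (c₀ ^ 2)⁻¹ • (1 : Matrix (Fin d) (Fin d) ℝ))⁻¹)
    (lam : ℝ) (hlam : lam = c₀ ^ 2 / (1 + c₀ ^ 2 * s ^ 2 / σ ^ 2)) :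
    (((σ ^ 2 + q ^ 2)⁻¹ • (Gᵀ * G)
        + (c₀ ^ 2)⁻¹ • (1 : Matrix (Fin d) (Fin d) ℝ))⁻¹.mulVec v
        = (c₀ ^ 2 / (1 + c₀ ^ 2 * s ^ 2 / (σ ^ 2 + q ^ 2))) • v)
    ∧ ((C + (q ^ 2 / σ ^ 4) • (C * (Gᵀ * G) * C)).mulVec v
        = (lam + q ^ 2 * s ^ 2 * c₀ ^ 4 / σ ^ 4
            * (1 + c₀ ^ 2 * s ^ 2 / σ ^ 2)⁻¹ ^ 2) • v) := by
  have hσ2 : (0:ℝ) < σ ^ 2 := by positivity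
  have hc2 : (0:ℝ) < c₀ ^ 2 := by positivity
  have hσq : (0:ℝ) < σ ^ 2 + q ^ 2 := by positivity
  constructor
  · have h := main_eig G (inv_pos.mpr hσq) (inv_pos.mpr hc2) hv
    rw [h]
    congr 1
    have hden : (0:ℝ) < 1 + c₀ ^ 2 * s ^ 2 / (σ ^ 2 + q ^ 2) := by positivity
    field_simp
    ring
  · have hCv : C.mulVec v = lam • v := by
      rw [hC, main_eig G (inv_pos.mpr hσ2) (inv_pos.mpr hc2) hv, hlam]
      congr 1
      have hden : (0:ℝ) < 1 + c₀ ^ 2 * s ^ 2 / σ ^ 2 := by positivity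
      field_simp
      ring
    have hCMC : (C * (Gᵀ * G) * C).mulVec v = (lam ^ 2 * s ^ 2) • v := by
      simp only [← mulVec_mulVec, hCv, mulVec_smul, hv, smul_smul]
      congr 1
      ring
    rw [add_mulVec, smul_mulVec, hCv, hCMC, smul_smul, ← add_smul]
    congr 1
    have hden : (0:ℝ) < 1 + c₀ ^ 2 * s ^ 2 / σ ^ 2 := by positivity
    rw [hlam, div_eq_mul_inv]
    ring
end
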